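/- Let G be a connected finite simple undirected graph on N ≥ 2 vertices with adjacency matrix A and Perron eigenvector p_1 (the entrywise positive unit eigenvector associated with the largest eigenvalue λ_1). For β → ∞ the ranking obtained by total communicability tends to the eigenvector centrality ranking: for any two vertices v_i, v_j with p_1(i) > p_1(j), there exists B > 0 such that for all β > B one has [e^{βA}𝟙]_i > [e^{βA}𝟙]_j. -/

import Mathlib

/-!
Diagonalising `A = ∑ₖ μₖ uₖ uₖᵀ` gives
`[e^{βA}𝟙]ᵢ - [e^{βA}𝟙]ⱼ = ∑ₖ e^{βμₖ} (uₖ ⬝ 𝟙) (uₖ(i) - uₖ(j))`,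
which for β → ∞ is dominated by the terms with `μₖ = λ₁`. Since the graph is connected and `p₁`
is positive, every `λ₁`-eigenvector is a multiple `t • p₁` (minimise `v / p₁` and propagate the
zero of `v - t • p₁` along edges), so each dominant term is `t² (p₁ ⬝ 𝟙) (p₁(i) - p₁(j)) > 0`.
-/

open Matrix Finset Filter

theorem Matrix.mem_spectrum_of_mulVec_eq_smul {K n : Type*} [Field K] [Fintype n]
    [DecidableEq n] {A : Matrix n n K} {μ : K} {v : n → K} (hv : v ≠ 0) (h : A *ᵥ v = μ • v) :
    μ ∈ spectrum K A := by
  rw [← spectrum_toLin']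
  exact (Module.End.hasEigenvalue_of_hasEigenvector
    ⟨by simpa [Module.End.mem_eigenspace_iff] using h, hv⟩).mem_spectrum

namespace Matrix.IsHermitian

variable {n : Type*} [Fintype n] [DecidableEq n] {A : Matrix n n ℝ} (hA : A.IsHermitian)

theorem exp_smul_eq (β : ℝ) :
    NormedSpace.exp (β • A) =
      (hA.eigenvectorUnitary : Matrix n n ℝ) * diagonal (fun k => Real.exp (β * hA.eigenvalues k)) *
        star (hA.eigenvectorUnitary : Matrix n n ℝ) := by
  set U : Matrix n n ℝ := (hA.eigenvectorUnitary : Matrix n n ℝ)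
  have hUinv : U⁻¹ = star U := inv_eq_right_inv (mem_unitaryGroup_iff.mp hA.eigenvectorUnitary.2)
  have hU : IsUnit U := (Unitary.toUnits hA.eigenvectorUnitary).isUnit
  have hspec : β • A = U * diagonal (fun k => β * hA.eigenvalues k) * U⁻¹ := by
    conv_lhs => rw [hA.spectral_theorem, Unitary.conjStarAlgAut_apply]
    rw [hUinv, ← smul_mul_assoc, ← mul_smul_comm, ← diagonal_smul]
    rfl
  rw [hspec, exp_conj U _ hU, exp_diagonal, hUinv]
  congr 3
  funext k
  rw [Pi.exp_def, Real.exp_eq_exp_ℝ]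

theorem exp_smul_mulVec_apply (β : ℝ) (v : n → ℝ) (s : n) :
    (NormedSpace.exp (β • A) *ᵥ v) s =
      ∑ k, Real.exp (β * hA.eigenvalues k) * (hA.eigenvectorBasis k ⬝ᵥ v) *
        hA.eigenvectorBasis k s := by
  rw [hA.exp_smul_eq, ← mulVec_mulVec, ← mulVec_mulVec, mulVec, dotProduct]
  refine sum_congr rfl fun k _ => ?_
  rw [mulVec_diagonal]
  simp only [eigenvectorUnitary_apply, mulVec, dotProduct, star_apply, star_trivial]
  ring

end Matrix.IsHermitian

namespace SimpleGraph

variable {V : Type*} [Fintype V] {G : SimpleGraph V} [DecidableRel G.Adj]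

theorem Preconnected.eq_zero_of_adjMatrix_mulVec_eq_smul (hG : G.Preconnected) {lam : ℝ}
    {w : V → ℝ} (hw : G.adjMatrix ℝ *ᵥ w = lam • w) (hw₀ : ∀ s, 0 ≤ w s) {k : V}
    (hk : w k = 0) : w = 0 := by
  have hadj : ∀ a b, G.Adj a b → w a = 0 → w b = 0 := fun a b hab ha => by
    have hsum : ∑ c ∈ G.neighborFinset a, w c = 0 := by
      rw [← adjMatrix_mulVec_apply, hw, Pi.smul_apply, ha, smul_zero]
    exact (sum_eq_zero_iff_of_nonneg fun c _ => hw₀ c).mp hsum b (by simpa using hab)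
  have hwalk : ∀ a b (p : G.Walk a b), w a = 0 → w b = 0 := fun a b p => by
    induction p with
    | nil => exact id
    | cons h _ ih => exact ih ∘ hadj _ _ h
  funext b
  exact (hG k b).elim fun p => hwalk k b p hk

theorem Connected.exists_eq_smul_of_adjMatrix_mulVec_eq_smul (hG : G.Connected) {lam : ℝ}
    {p v : V → ℝ} (hp : G.adjMatrix ℝ *ᵥ p = lam • p) (hp₀ : ∀ s, 0 < p s)
    (hv : G.adjMatrix ℝ *ᵥ v = lam • v) : ∃ t : ℝ, v = t • p := by
  have : Nonempty V := hG.nonempty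
  obtain ⟨k, -, hk⟩ := exists_min_image univ (fun s => v s / p s) univ_nonempty
  refine ⟨v k / p k, ?_⟩
  have hw : G.adjMatrix ℝ *ᵥ (v - (v k / p k) • p) = lam • (v - (v k / p k) • p) := by
    rw [mulVec_sub, mulVec_smul, hv, hp, smul_comm, smul_sub]
  have hw₀ : ∀ s, 0 ≤ (v - (v k / p k) • p) s := fun s => by
    have := hk s (mem_univ s)
    rw [le_div_iff₀ (hp₀ s)] at this
    simpa using this
  have hwk : (v - (v k / p k) • p) k = 0 := by
    simp [div_mul_cancel₀ _ (hp₀ k).ne']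
  exact sub_eq_zero.mp (hG.preconnected.eq_zero_of_adjMatrix_mulVec_eq_smul hw hw₀ hwk)

end SimpleGraph

theorem eventually_pos_sum_exp_mul {ι : Type*} [Fintype ι] {μ c : ι → ℝ} {lam : ℝ}
    (hμ : ∀ k, μ k ≤ lam) (hc : 0 < ∑ k ∈ univ.filter (μ · = lam), c k) :
    ∀ᶠ β in atTop, 0 < ∑ k, Real.exp (β * μ k) * c k := by
  have hlim : Tendsto (fun β => ∑ k, Real.exp (β * (μ k - lam)) * c k) atTop
      (nhds (∑ k, if μ k = lam then c k else 0)) := by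
    refine tendsto_finsetSum _ fun k _ => ?_
    split_ifs with h
    · simp [h]
    · have hneg : μ k - lam < 0 := sub_neg.mpr (lt_of_le_of_ne (hμ k) h)
      simpa using (Real.tendsto_exp_atBot.comp
        (tendsto_id.atTop_mul_const_of_neg hneg)).mul_const (c k)
  rw [← sum_filter] at hlim
  filter_upwards [hlim.eventually (eventually_gt_nhds hc)] with β hβ
  have : ∑ k, Real.exp (β * μ k) * c k =
      Real.exp (β * lam) * ∑ k, Real.exp (β * (μ k - lam)) * c k := by
    rw [mul_sum]
    refine sum_congr rfl fun k _ => ?_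
    rw [← mul_assoc, ← Real.exp_add]
    ring_nf
  rw [this]
  exact mul_pos (Real.exp_pos _) hβ

theorem dotProduct_one_mul_sub_pos_of_eq_smul {ι : Type*} [Fintype ι] {p v : ι → ℝ}
    (hp : ∀ s, 0 < p s) {i j : ι} (hij : p j < p i) {t : ℝ} (ht : t ≠ 0) (hv : v = t • p) :
    0 < (v ⬝ᵥ 1) * (v i - v j) := by
  have : Nonempty ι := ⟨i⟩
  have hsum : 0 < p ⬝ᵥ 1 := by
    rw [dotProduct_one]
    exact sum_pos (fun s _ => hp s) univ_nonempty
  have : (v ⬝ᵥ 1) * (v i - v j) = t ^ 2 * (p ⬝ᵥ 1) * (p i - p j) := by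
    simp only [hv, smul_dotProduct, Pi.smul_apply, smul_eq_mul]
    ring
  rw [this]
  have := sub_pos.mpr hij
  positivity

theorem stmt13_general {N : ℕ} (G : SimpleGraph (Fin N)) [DecidableRel G.Adj]
    (hconn : G.Connected)
    (lam : ℝ) (p₁ : Fin N → ℝ)
    (heig : G.adjMatrix ℝ *ᵥ p₁ = lam • p₁)
    (hpos : ∀ t, 0 < p₁ t)
    (hmax : ∀ μ ∈ spectrum ℝ (G.adjMatrix ℝ), |μ| ≤ lam)
    (i j : Fin N) (hij : p₁ j < p₁ i) :
    ∃ B > 0, ∀ β : ℝ, B < β →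
      (NormedSpace.exp (β • G.adjMatrix ℝ) *ᵥ (fun _ => 1)) j <
      (NormedSpace.exp (β • G.adjMatrix ℝ) *ᵥ (fun _ => 1)) i := by
  have hA : (G.adjMatrix ℝ).IsHermitian := G.isSymm_adjMatrix
  set u := fun k => ⇑(hA.eigenvectorBasis k)
  have hle : ∀ k, hA.eigenvalues k ≤ lam := fun k =>
    le_of_abs_le (hmax _ (hA.eigenvalues_mem_spectrum_real k))
  have hlam : lam ∈ Set.range hA.eigenvalues := by
    rw [← hA.spectrum_real_eq_range_eigenvalues]
    exact mem_spectrum_of_mulVec_eq_smul (fun h => (hpos i).ne' (congrFun h i)) heig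
  have htop :
      0 < ∑ k ∈ univ.filter (hA.eigenvalues · = lam), (u k ⬝ᵥ 1) * (u k i - u k j) := by
    obtain ⟨k₀, hk₀⟩ := hlam
    refine sum_pos (fun k hk => ?_) ⟨k₀, by simp [hk₀]⟩
    have hk : G.adjMatrix ℝ *ᵥ u k = lam • u k := by
      rw [hA.mulVec_eigenvectorBasis, (mem_filter.mp hk).2]
    obtain ⟨t, ht⟩ := hconn.exists_eq_smul_of_adjMatrix_mulVec_eq_smul heig hpos hk
    refine dotProduct_one_mul_sub_pos_of_eq_smul hpos hij ?_ ht
    rintro rfl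
    rw [zero_smul] at ht
    exact hA.eigenvectorBasis.orthonormal.ne_zero k (by simpa [u] using ht)
  obtain ⟨B, hB⟩ := eventually_atTop.mp (eventually_pos_sum_exp_mul hle htop)
  refine ⟨max B 1, by positivity, fun β hβ => ?_⟩
  rw [← sub_pos, hA.exp_smul_mulVec_apply, hA.exp_smul_mulVec_apply, ← sum_sub_distrib]
  convert hB β (le_max_left B 1 |>.trans hβ.le) using 2 with k
  simp only [u, ← Pi.one_def]
  ring

/-- As β → ∞ the total communicability ranking tends to the eigenvector centrality
ranking: for a connected graph with Perron eigenvector p₁ (entrywise positive unit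
eigenvector of the largest eigenvalue λ₁, which equals the spectral radius), if
p₁(i) > p₁(j) then for all large enough β one has [e^{βA}𝟙]_i > [e^{βA}𝟙]_j. -/
theorem stmt13 {N : ℕ} (hN : 2 ≤ N) (G : SimpleGraph (Fin N)) [DecidableRel G.Adj]
    (hconn : G.Connected)
    (lam : ℝ) (p₁ : Fin N → ℝ)
    (heig : G.adjMatrix ℝ *ᵥ p₁ = lam • p₁)
    (hpos : ∀ t, 0 < p₁ t)
    (hnorm : ∑ t, p₁ t ^ 2 = 1)
    (hmax : ∀ μ ∈ spectrum ℝ (G.adjMatrix ℝ), |μ| ≤ lam)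
    (i j : Fin N) (hij : p₁ j < p₁ i) :
    ∃ B > 0, ∀ β : ℝ, B < β →
      (NormedSpace.exp (β • G.adjMatrix ℝ) *ᵥ (fun _ => 1)) j <
      (NormedSpace.exp (β • G.adjMatrix ℝ) *ᵥ (fun _ => 1)) i :=
  stmt13_general G hconn lam p₁ heig hpos hmax i j hij
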